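/- Suppose a unit vector φ ∈ C^d ⊗ C^d satisfies ⟨φ,(A(j)⊗id)φ⟩ = λδ(j) + (1−λ)/d and ⟨φ,(B(k)⊗id)φ⟩ = γδ(k) + (1−γ)/d for all j,k ∈ Z_d, where δ is the point mass at 0. Then γ ≤ (1/d)[(d−2)(1−λ) + 2√((1−d)λ² + (d−2)λ + 1)]. -/

import Mathlib

open Matrix Kronecker Finset
open scoped ComplexOrder

/-- ω = e^{2πi/d} -/
noncomputable def ww (d : ℕ) : ℂ := Complex.exp (2 * Real.pi * Complex.I / d)

/-- shift unitary U_x φ_k = φ_{k+x} -/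
noncomputable def Um (d : ℕ) (x : ZMod d) : Matrix (ZMod d) (ZMod d) ℂ :=
  fun i j => if i = j + x then 1 else 0

/-- modulation unitary V_y φ_k = ω^{yk} φ_k -/
noncomputable def Vm (d : ℕ) (y : ZMod d) : Matrix (ZMod d) (ZMod d) ℂ :=
  Matrix.diagonal fun i => ww d ^ (y * i).val

/-- finite Fourier transform F φ_k = (1/√d) Σ_h ω^{-hk} φ_h -/
noncomputable def Fm (d : ℕ) : Matrix (ZMod d) (ZMod d) ℂ :=
  fun i j => (1 / Real.sqrt d : ℂ) * (ww d)⁻¹ ^ (i * j).val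

/-- the standard orthonormal basis vector φ_k -/
noncomputable def phiV (d : ℕ) (k : ZMod d) : ZMod d → ℂ := Pi.single k 1

/-- ψ_k = F* φ_k -/
noncomputable def psiV (d : ℕ) [NeZero d] (k : ZMod d) : ZMod d → ℂ :=
  (Fm d)ᴴ.mulVec (phiV d k)

/-- A(j) = |φ_j⟩⟨φ_j| -/
noncomputable def Aob (d : ℕ) (j : ZMod d) : Matrix (ZMod d) (ZMod d) ℂ :=
  vecMulVec (phiV d j) (star (phiV d j))

/-- B(k) = |ψ_k⟩⟨ψ_k| -/
noncomputable def Bob (d : ℕ) [NeZero d] (k : ZMod d) : Matrix (ZMod d) (ZMod d) ℂ :=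
  vecMulVec (psiV d k) (star (psiV d k))

/-!
Write `φ = ∑ₐ eₐ ⊗ vₐ` and `pₐ = λ δ(a) + (1 - λ)/d`. The `A`-statistics say `‖vₐ‖² = pₐ`, and
the `B`-statistics are the discrete Fourier transform of the diagonals of the Gram matrix
`⟪vₐ, v_b⟫`, so Fourier inversion gives `γ = ∑_b ⟪v_{b+1}, v_b⟫`. By Cauchy–Schwarz each term is
at most `‖v_{b+1}‖ ‖v_b‖`: the two terms touching `b = 0` contribute `√(p₀ p₁)` each and the
other `d - 2` contribute `(1 - λ)/d` each.
-/

open ZMod (stdAddChar)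

section RowVectors

variable {m n : Type*} [Fintype m] [Fintype n] [DecidableEq n]

def rowVec (φ : m × n → ℂ) (a : m) : EuclideanSpace ℂ n := WithLp.toLp 2 fun s => φ (a, s)

lemma star_dotProduct_kronecker_one_mulVec (φ : m × n → ℂ) (M : Matrix m m ℂ) :
    star φ ⬝ᵥ ((M ⊗ₖ (1 : Matrix n n ℂ)) *ᵥ φ) =
      ∑ a, ∑ b, M a b * inner ℂ (rowVec φ a) (rowVec φ b) := by
  simp only [dotProduct, mulVec, kroneckerMap_apply, one_apply, mul_ite, ite_mul, mul_one,
    mul_zero, zero_mul, Fintype.sum_prod_type, Finset.sum_ite_eq, Finset.mem_univ, if_true,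
    rowVec, PiLp.inner_apply, RCLike.inner_apply, Pi.star_apply, RCLike.star_def,
    Finset.mul_sum]
  refine Finset.sum_congr rfl fun a _ => ?_
  rw [Finset.sum_comm]
  exact Finset.sum_congr rfl fun b _ => Finset.sum_congr rfl fun s _ => by ring

end RowVectors

lemma Aob_apply {d : ℕ} (j a b : ZMod d) :
    Aob d j a b = if a = j ∧ b = j then 1 else 0 := by
  simp [Aob, vecMulVec_apply, phiV, Pi.single_apply, ← ite_and, and_comm]

section

variable {d : ℕ} [NeZero d]

lemma ww_pow_val (z : ZMod d) : ww d ^ z.val = stdAddChar z := by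
  rw [ZMod.stdAddChar_apply, ZMod.toCircle_apply, ww, ← Complex.exp_nat_mul]
  ring_nf

lemma starRingEnd_stdAddChar (z : ZMod d) :
    starRingEnd ℂ (stdAddChar z) = stdAddChar (-z) := by
  rw [ZMod.stdAddChar_apply, ZMod.stdAddChar_apply, ← Circle.coe_inv_eq_conj,
    ← AddChar.map_neg_eq_inv]

lemma Fm_apply (i j : ZMod d) : Fm d i j = (Real.sqrt d : ℂ)⁻¹ * stdAddChar (-(i * j)) := by
  rw [Fm, one_div, inv_pow, ww_pow_val, AddChar.map_neg_eq_inv]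

lemma psiV_apply (k a : ZMod d) : psiV d k a = (Real.sqrt d : ℂ)⁻¹ * stdAddChar (k * a) := by
  simp only [psiV, phiV, mulVec_single_one, col_apply, conjTranspose_apply, Fm_apply,
    RCLike.star_def, map_mul, map_inv₀, Complex.conj_ofReal, starRingEnd_stdAddChar, neg_neg]

lemma Bob_apply (k a b : ZMod d) :
    Bob d k a b = (d : ℂ)⁻¹ * stdAddChar (k * (a - b)) := by
  have hsqrt : ((Real.sqrt d : ℂ)⁻¹) * (Real.sqrt d : ℂ)⁻¹ = (d : ℂ)⁻¹ := by
    rw [← mul_inv, ← Complex.ofReal_mul, Real.mul_self_sqrt (Nat.cast_nonneg d),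
      Complex.ofReal_natCast]
  simp only [Bob, vecMulVec_apply, Pi.star_apply, psiV_apply, RCLike.star_def, map_mul,
    map_inv₀, Complex.conj_ofReal, starRingEnd_stdAddChar]
  rw [mul_sub, sub_eq_add_neg, AddChar.map_add_eq_mul, ← hsqrt]
  ring

lemma sum_stdAddChar_mul (t : ZMod d) :
    ∑ k : ZMod d, stdAddChar (k * t) = if t = 0 then (d : ℂ) else 0 := by
  rw [AddChar.sum_mulShift t (ZMod.isPrimitive_stdAddChar d), ZMod.card, Nat.cast_ite,
    Nat.cast_zero]

lemma sum_stdAddChar_mul_sum_Bob (r : ZMod d → ZMod d → ℂ) (t : ZMod d) :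
    ∑ k, stdAddChar (-(k * t)) * ∑ a, ∑ b, Bob d k a b * r a b = ∑ b, r (b + t) b := by
  have hterm : ∀ k a b : ZMod d, stdAddChar (-(k * t)) * (Bob d k a b * r a b) =
      (d : ℂ)⁻¹ * stdAddChar (k * (a - b - t)) * r a b := fun k a b => by
    rw [Bob_apply, show k * (a - b - t) = k * (a - b) + -(k * t) by ring,
      AddChar.map_add_eq_mul]
    ring
  have hd : (d : ℂ) ≠ 0 := NeZero.ne _
  calc ∑ k, stdAddChar (-(k * t)) * ∑ a, ∑ b, Bob d k a b * r a b
      = ∑ a, ∑ b, (d : ℂ)⁻¹ * (∑ k, stdAddChar (k * (a - b - t))) * r a b := by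
        simp only [Finset.mul_sum, hterm, Finset.sum_mul]
        rw [Finset.sum_comm]
        exact Finset.sum_congr rfl fun a _ => Finset.sum_comm
    _ = ∑ b, r (b + t) b := by
        rw [Finset.sum_comm]
        simp only [sum_stdAddChar_mul, sub_sub, sub_eq_zero, mul_ite, mul_zero,
          inv_mul_cancel₀ hd, ite_mul, one_mul, zero_mul, Finset.sum_ite_eq', Finset.mem_univ,
          if_true]

lemma sum_stdAddChar_mul_pointMass {t : ZMod d} (ht : t ≠ 0) (g c : ℂ) :
    ∑ k : ZMod d, stdAddChar (-(k * t)) * (g * (if k = 0 then 1 else 0) + c) = g := by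
  have hvanish : ∑ k : ZMod d, stdAddChar (-(k * t)) = 0 := by
    simpa only [mul_neg, if_neg (neg_ne_zero.2 ht)] using sum_stdAddChar_mul (-t)
  simp only [mul_add, Finset.sum_add_distrib, ← Finset.sum_mul, hvanish, zero_mul, add_zero,
    mul_ite, mul_one, mul_zero, Finset.sum_ite_eq', Finset.mem_univ, if_true, neg_zero,
    AddChar.map_zero_eq_one, one_mul]

lemma star_dotProduct_Aob_kronecker_one_mulVec (φ : ZMod d × ZMod d → ℂ) (j : ZMod d) :
    star φ ⬝ᵥ ((Aob d j ⊗ₖ (1 : Matrix (ZMod d) (ZMod d) ℂ)) *ᵥ φ) =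
      ((‖rowVec φ j‖ ^ 2 : ℝ) : ℂ) := by
  simp only [star_dotProduct_kronecker_one_mulVec, Aob_apply, ite_and, ite_mul, one_mul,
    zero_mul, Finset.sum_ite_irrel, Finset.sum_const_zero, Finset.sum_ite_eq', Finset.mem_univ,
    if_true, inner_self_eq_norm_sq_to_K]
  norm_cast

end

lemma sum_mul_add_one_of_eq_of_ne_zero {R : Type*} [CommRing R] {d : ℕ} [NeZero d]
    (hd : 2 ≤ d) {x : ZMod d → R} {c : R} (hx : ∀ a ≠ 0, x a = c) :
    ∑ b, x (b + 1) * x b = ((d : R) - 2) * c ^ 2 + 2 * c * x 0 := by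
  have : Fact (1 < d) := ⟨hd⟩
  have hneg : (-1 : ZMod d) ≠ 0 := neg_ne_zero.2 one_ne_zero
  have hmem : (-1 : ZMod d) ∈ univ.erase 0 := mem_erase.2 ⟨hneg, mem_univ _⟩
  have hrest : ∀ b ∈ (univ.erase (0 : ZMod d)).erase (-1), x (b + 1) * x b = c ^ 2 := by
    intro b hb
    obtain ⟨hb1, hb0, -⟩ := by simpa only [mem_erase] using hb
    rw [hx b hb0, hx (b + 1) fun h => hb1 (eq_neg_of_add_eq_zero_left h), sq]
  have hcard : ((univ.erase (0 : ZMod d)).erase (-1)).card = d - 2 := by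
    rw [card_erase_of_mem hmem, card_erase_of_mem (mem_univ _), card_univ, ZMod.card]
    rfl
  rw [← sum_erase_add _ _ (mem_univ 0), ← sum_erase_add _ _ hmem, sum_congr rfl hrest,
    sum_const, hcard, nsmul_eq_mul, Nat.cast_sub hd, neg_add_cancel, zero_add,
    hx 1 one_ne_zero, hx (-1) hneg]
  push_cast
  ring

lemma sqrt_quadratic_eq_mul {d l c x : ℝ} (hd : 0 ≤ d) (hc : 0 ≤ c) (hx : 0 ≤ x)
    (hc2 : d * c ^ 2 = 1 - l) (hx2 : d * x ^ 2 = (d - 1) * l + 1) :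
    √((1 - d) * l ^ 2 + (d - 2) * l + 1) = d * (c * x) := by
  have hfactor : (1 - d) * l ^ 2 + (d - 2) * l + 1 = (d * (c * x)) ^ 2 := by
    linear_combination (-(d * x ^ 2)) * hc2 - (1 - l) * hx2
  rw [hfactor, Real.sqrt_sq (by positivity)]

theorem unsharpness_tradeoff_bound_general (d : ℕ) (hd : 2 ≤ d) [NeZero d]
    (l g : ℝ)
    (φ : ZMod d × ZMod d → ℂ)
    (hA : ∀ j : ZMod d,
      star φ ⬝ᵥ ((Aob d j ⊗ₖ (1 : Matrix (ZMod d) (ZMod d) ℂ)).mulVec φ) =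
        ((l * (if j = 0 then 1 else 0) + (1 - l) / d : ℝ) : ℂ))
    (hB : ∀ k : ZMod d,
      star φ ⬝ᵥ ((Bob d k ⊗ₖ (1 : Matrix (ZMod d) (ZMod d) ℂ)).mulVec φ) =
        ((g * (if k = 0 then 1 else 0) + (1 - g) / d : ℝ) : ℂ)) :
    g ≤ (1 / d) * ((d - 2) * (1 - l) +
      2 * Real.sqrt ((1 - d) * l ^ 2 + (d - 2) * l + 1)) := by
  have : Fact (1 < d) := ⟨hd⟩
  set v := rowVec φ
  have hnorm (j : ZMod d) : ‖v j‖ ^ 2 = l * (if j = 0 then 1 else 0) + (1 - l) / d := by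
    exact_mod_cast (star_dotProduct_Aob_kronecker_one_mulVec φ j).symm.trans (hA j)
  have hg_eq : (g : ℂ) = ∑ b, inner ℂ (v (b + 1)) (v b) := calc
    (g : ℂ) = ∑ k, stdAddChar (-(k * 1)) * (g * (if k = 0 then 1 else 0) + (1 - g) / d) :=
      (sum_stdAddChar_mul_pointMass (t := 1) one_ne_zero _ _).symm
    _ = ∑ k, stdAddChar (-(k * 1)) * ∑ a, ∑ b, Bob d k a b * inner ℂ (v a) (v b) := by
      refine Finset.sum_congr rfl fun k _ => ?_
      rw [← star_dotProduct_kronecker_one_mulVec, hB k]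
      push_cast [apply_ite]
      ring
    _ = ∑ b, inner ℂ (v (b + 1)) (v b) := sum_stdAddChar_mul_sum_Bob _ 1
  have hg_le : g ≤ ∑ b, ‖v (b + 1)‖ * ‖v b‖ := by
    calc g = RCLike.re (∑ b, inner ℂ (v (b + 1)) (v b)) := by rw [← hg_eq]; rfl
      _ ≤ ‖∑ b, inner ℂ (v (b + 1)) (v b)‖ := RCLike.re_le_norm _
      _ ≤ ∑ b, ‖v (b + 1)‖ * ‖v b‖ :=
        (norm_sum_le _ _).trans (Finset.sum_le_sum fun b _ => norm_inner_le_norm _ _)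
  have hflat (a : ZMod d) (ha : a ≠ 0) : ‖v a‖ = ‖v 1‖ := by
    refine (pow_left_inj₀ (norm_nonneg _) (norm_nonneg _) two_ne_zero).1 ?_
    rw [hnorm, hnorm, if_neg ha, if_neg one_ne_zero]
  have h1 : (d : ℝ) * ‖v 1‖ ^ 2 = 1 - l := by
    rw [hnorm, if_neg one_ne_zero]; field_simp; ring
  have h0 : (d : ℝ) * ‖v 0‖ ^ 2 = (d - 1) * l + 1 := by
    rw [hnorm, if_pos rfl]; field_simp; ring
  rw [sum_mul_add_one_of_eq_of_ne_zero hd hflat] at hg_le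
  rw [sqrt_quadratic_eq_mul (Nat.cast_nonneg d) (norm_nonneg _) (norm_nonneg _) h1 h0]
  calc g ≤ _ := hg_le
    _ = _ := by field_simp; linear_combination (d - 2) * h1

theorem unsharpness_tradeoff_bound (d : ℕ) (hd : 2 ≤ d) [NeZero d]
    (l g : ℝ) (hl : 0 ≤ l) (hl1 : l ≤ 1) (hg : 0 ≤ g) (hg1 : g ≤ 1)
    (φ : ZMod d × ZMod d → ℂ) (hunit : star φ ⬝ᵥ φ = 1)
    (hA : ∀ j : ZMod d,
      star φ ⬝ᵥ ((Aob d j ⊗ₖ (1 : Matrix (ZMod d) (ZMod d) ℂ)).mulVec φ) =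
        ((l * (if j = 0 then 1 else 0) + (1 - l) / d : ℝ) : ℂ))
    (hB : ∀ k : ZMod d,
      star φ ⬝ᵥ ((Bob d k ⊗ₖ (1 : Matrix (ZMod d) (ZMod d) ℂ)).mulVec φ) =
        ((g * (if k = 0 then 1 else 0) + (1 - g) / d : ℝ) : ℂ)) :
    g ≤ (1 / d) * ((d - 2) * (1 - l) +
      2 * Real.sqrt ((1 - d) * l ^ 2 + (d - 2) * l + 1)) :=
  unsharpness_tradeoff_bound_general d hd l g φ hA hB
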